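/- Let (K,d) and (C,b) be chain complexes with a group G acting by chain automorphisms, and let f : K → C be a G-equivariant quasi-isomorphism. Assume that for every n, every k ∈ K_{n+1} with d(k) ∈ K_n^inv ∩ im(d) decomposes as k = k' + z with k' ∈ K_{n+1}^inv and z ∈ ker(d). Assume also that the restriction of f to invariant subcomplexes is surjective on homology. Then the restriction f : K^inv → C^inv induces an injective map on homology; more precisely, if k ∈ K_n^inv is a cycle whose image f(k) is a boundary in C_n^inv, then k is a boundary of an invariant element, i.e., k = d(k') for some k' ∈ K_{n+1}^inv. -/

import Mathlib

theorem equivariant_quasi_iso_invariants_general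
    (G : Type) [Group G]
    (K C : ℤ → Type) [∀ n, AddCommGroup (K n)] [∀ n, Module ℂ (K n)]
    [∀ n, AddCommGroup (C n)] [∀ n, Module ℂ (C n)]
    (d : ∀ n, K (n + 1) →ₗ[ℂ] K n) (b : ∀ n, C (n + 1) →ₗ[ℂ] C n)
    (ρK : ∀ n, G →* (K n ≃ₗ[ℂ] K n)) (ρC : ∀ n, G →* (C n ≃ₗ[ℂ] C n))
    (f : ∀ n, K n →ₗ[ℂ] C n)
    -- `f` is a quasi-isomorphism: injective and surjective on homology
    (hqinj : ∀ (n : ℤ) (k : K (n + 1)), d n k = 0 →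
      (∃ c : C (n + 1 + 1), b (n + 1) c = f (n + 1) k) →
      ∃ k₀ : K (n + 1 + 1), d (n + 1) k₀ = k)
    -- condition (4) of the lemma
    (hcond : ∀ (n : ℤ) (k : K (n + 1)), (∀ g : G, ρK n g (d n k) = d n k) →
      ∃ k' z : K (n + 1), (∀ g : G, ρK (n + 1) g k' = k') ∧ d n z = 0 ∧ k = k' + z) :
    ∀ (n : ℤ) (k : K (n + 1)), (∀ g : G, ρK (n + 1) g k = k) → d n k = 0 →
      (∃ c : C (n + 1 + 1), (∀ g : G, ρC (n + 1 + 1) g c = c) ∧ b (n + 1) c = f (n + 1) k) →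
      ∃ k' : K (n + 1 + 1), (∀ g : G, ρK (n + 1 + 1) g k' = k') ∧ d (n + 1) k' = k := by
  rintro n k hk_inv hk_cycle ⟨c, -, hc⟩
  obtain ⟨k₀, rfl⟩ := hqinj n k hk_cycle ⟨c, hc⟩
  -- Changing a primitive by a cycle does not change its boundary.
  obtain ⟨k', z, hk'_inv, hz, rfl⟩ := hcond (n + 1) k₀ hk_inv
  exact ⟨k', hk'_inv, by rw [map_add, hz, add_zero]⟩

/-- Let `(K,d)` and `(C,b)` be chain complexes of complex vector spaces with a
group `G` acting by chain automorphisms, and `f : K → C` a `G`-equivariant quasi-isomorphism.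
Assume every `k ∈ K (n+1)` with `d k` invariant decomposes as `k' + z` with `k'` invariant
and `z ∈ ker d`, and that `f` restricted to invariant subcomplexes is surjective on homology.
Then the restriction of `f` to invariants is injective on homology: an invariant cycle
whose image is a boundary of an invariant chain is itself the boundary of an invariant chain. -/
theorem equivariant_quasi_iso_invariants
    (G : Type) [Group G]
    (K C : ℤ → Type) [∀ n, AddCommGroup (K n)] [∀ n, Module ℂ (K n)]
    [∀ n, AddCommGroup (C n)] [∀ n, Module ℂ (C n)]
    (d : ∀ n, K (n + 1) →ₗ[ℂ] K n) (b : ∀ n, C (n + 1) →ₗ[ℂ] C n)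
    (hdd : ∀ n, (d n).comp (d (n + 1)) = 0)
    (hbb : ∀ n, (b n).comp (b (n + 1)) = 0)
    (ρK : ∀ n, G →* (K n ≃ₗ[ℂ] K n)) (ρC : ∀ n, G →* (C n ≃ₗ[ℂ] C n))
    (hdG : ∀ n (g : G) (x : K (n + 1)), d n (ρK (n + 1) g x) = ρK n g (d n x))
    (hbG : ∀ n (g : G) (x : C (n + 1)), b n (ρC (n + 1) g x) = ρC n g (b n x))
    (f : ∀ n, K n →ₗ[ℂ] C n)
    (hchain : ∀ n, (f n).comp (d n) = (b n).comp (f (n + 1)))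
    (hfG : ∀ n (g : G) (x : K n), f n (ρK n g x) = ρC n g (f n x))
    -- `f` is a quasi-isomorphism: injective and surjective on homology
    (hqinj : ∀ (n : ℤ) (k : K (n + 1)), d n k = 0 →
      (∃ c : C (n + 1 + 1), b (n + 1) c = f (n + 1) k) →
      ∃ k₀ : K (n + 1 + 1), d (n + 1) k₀ = k)
    (hqsurj : ∀ (n : ℤ) (c : C (n + 1)), b n c = 0 →
      ∃ (k : K (n + 1)) (c' : C (n + 1 + 1)),
        d n k = 0 ∧ f (n + 1) k = c + b (n + 1) c')
    -- condition (4) of the lemma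
    (hcond : ∀ (n : ℤ) (k : K (n + 1)), (∀ g : G, ρK n g (d n k) = d n k) →
      ∃ k' z : K (n + 1), (∀ g : G, ρK (n + 1) g k' = k') ∧ d n z = 0 ∧ k = k' + z)
    -- the restriction of `f` to invariant subcomplexes is surjective on homology
    (hsurjinv : ∀ (n : ℤ) (c : C (n + 1)), b n c = 0 → (∀ g : G, ρC (n + 1) g c = c) →
      ∃ (k : K (n + 1)) (c' : C (n + 1 + 1)), d n k = 0 ∧ (∀ g : G, ρK (n + 1) g k = k) ∧
        (∀ g : G, ρC (n + 1 + 1) g c' = c') ∧ f (n + 1) k = c + b (n + 1) c') :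
    ∀ (n : ℤ) (k : K (n + 1)), (∀ g : G, ρK (n + 1) g k = k) → d n k = 0 →
      (∃ c : C (n + 1 + 1), (∀ g : G, ρC (n + 1 + 1) g c = c) ∧ b (n + 1) c = f (n + 1) k) →
      ∃ k' : K (n + 1 + 1), (∀ g : G, ρK (n + 1 + 1) g k' = k') ∧ d (n + 1) k' = k :=
  equivariant_quasi_iso_invariants_general G K C d b ρK ρC f hqinj hcond
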